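/- Let f be holomorphic on D_R with sup_{|ζ|<R} |f(ζ)| = M < ∞. Then for every n ≥ 0 and every z with |z| = r < R, |f^{(n)}(z) - f^{(n)}(0)| ≤ (2 n! (R^{n+1} - (R - r)^{n+1})) / ((R - r)^{n+1} R^n) · (M - |f(0)|). -/

import Mathlib

/-!
Carathéodory's inequality: if `re p ≤ A` on a disc of radius `R` about `c`, then
`‖p⁽ᵏ⁾(c)‖ Rᵏ / k! ≤ 2 (A - re p(c))` for `k ≥ 1`. On a circle of radius `ρ < R` one has
`conj (z - c) = ρ² / (z - c)`, so averaging `conj (z - c)ᵏ · 2 (A - re p)` returns `-ρ²ᵏ` times the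
`k`-th Taylor coefficient, while its norm is at most `ρᵏ` times the average of the nonnegative
function `2 (A - re p)`, which is `2 (A - re p(c))` by the mean value property.
Applied to `e^{-i arg f(0)} f` with `A = M`, this bounds the Taylor coefficients of `f` at `0` by
`2 (M - ‖f 0‖) / Rᵏ`. Bounding the Taylor series of `f⁽ⁿ⁾ - f⁽ⁿ⁾(0)` about `0` termwise leaves
`2 (M - ‖f 0‖) n! / Rⁿ · ∑_{m ≥ 1} C(m + n, n) (r / R)ᵐ`, a differentiated geometric series equal
to `2 (M - ‖f 0‖) n! / Rⁿ · ((1 - r / R)^{-(n+1)} - 1)`.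
-/

open Metric Real
open scoped ComplexConjugate Nat Topology

namespace Real

theorem circleAverage_conj (g : ℂ → ℂ) (c : ℂ) (R : ℝ) :
    circleAverage (fun z ↦ conj (g z)) c R = conj (circleAverage g c R) := by
  simp only [circleAverage, intervalIntegral.integral_of_le two_pi_pos.le, integral_conj,
    Complex.real_smul, map_mul, Complex.conj_ofReal]

theorem norm_circleAverage_le {E : Type*} [NormedAddCommGroup E] [NormedSpace ℝ E]
    (f : ℂ → E) (c : ℂ) (R : ℝ) :
    ‖circleAverage f c R‖ ≤ circleAverage (‖f ·‖) c R := by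
  simp only [circleAverage, norm_smul, smul_eq_mul, norm_inv, Real.norm_eq_abs,
    abs_of_pos two_pi_pos]
  gcongr
  exact intervalIntegral.norm_integral_le_integral_norm two_pi_pos.le

end Real

theorem hasSum_succ_add_choose_mul_pow_succ {𝕜 : Type*} [NormedDivisionRing 𝕜]
    [HasSummableGeomSeries 𝕜] {x : 𝕜} (hx : ‖x‖ < 1) (n : ℕ) :
    HasSum (fun m ↦ ((m + 1 + n).choose n : 𝕜) * x ^ (m + 1)) ((1 - x)⁻¹ ^ (n + 1) - 1) := by
  have h := hasSum_choose_mul_geometric_of_norm_lt_one' n hx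
  rw [Ring.inverse_eq_inv', ← hasSum_nat_add_iff' 1] at h
  simpa only [Finset.range_one, Finset.sum_singleton, zero_add, Nat.choose_self, Nat.cast_one,
    pow_zero, mul_one] using h

namespace Complex

variable {p : ℂ → ℂ} {c : ℂ} {ρ : ℝ}

theorem conj_sub_eq_sq_div_of_mem_sphere {z : ℂ} (hρ : ρ ≠ 0) (hz : z ∈ sphere c ρ) :
    conj (z - c) = ρ ^ 2 / (z - c) := by
  have hzc : ‖z - c‖ = ρ := mem_sphere_iff_norm.mp hz
  have hne : z - c ≠ 0 := by
    rintro h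
    exact hρ (by simpa [h] using hzc.symm)
  rw [eq_div_iff hne, mul_comm, mul_conj', hzc]

theorem circleAverage_sub_center_pow_mul_eq_zero (hp : DiffContOnCl ℂ p (ball c |ρ|))
    {k : ℕ} (hk : k ≠ 0) :
    circleAverage (fun z ↦ (z - c) ^ k * p z) c ρ = 0 := by
  have : DiffContOnCl ℂ (fun z ↦ (z - c) ^ k * p z) (ball c |ρ|) :=
    ((differentiable_id.sub_const c).pow k).diffContOnCl.smul hp
  rw [this.circleAverage, sub_self, zero_pow hk, zero_mul]

theorem circleAverage_conj_sub_center_pow_mul (hρ : 0 < ρ) (hp : DiffContOnCl ℂ p (ball c ρ))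
    (k : ℕ) :
    circleAverage (fun z ↦ conj (z - c) ^ k * p z) c ρ =
      ρ ^ (2 * k) * iteratedDeriv k p c / k ! := by
  rw [circleAverage_eq_circleIntegral hρ.ne', circleIntegral.integral_congr hρ.le
    (g := fun z ↦ ((ρ : ℂ) ^ (2 * k)) • ((1 / (z - c) ^ (k + 1)) • p z)),
    circleIntegral.integral_smul, hp.circleIntegral_one_div_sub_center_pow_smul hρ k]
  · simp only [smul_eq_mul]
    field_simp
  · intro z hz
    simp only [smul_eq_mul, conj_sub_eq_sq_div_of_mem_sphere hρ.ne' hz, div_eq_mul_inv, mul_pow,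
      inv_pow, pow_succ, mul_inv, ← pow_mul]
    ring

theorem norm_iteratedDeriv_mul_pow_le_of_forall_mem_sphere_re_le {A : ℝ} (hρ : 0 < ρ)
    (hp : DiffContOnCl ℂ p (ball c ρ)) (hA : ∀ z ∈ sphere c ρ, (p z).re ≤ A)
    {k : ℕ} (hk : k ≠ 0) :
    ‖iteratedDeriv k p c‖ * ρ ^ k ≤ k ! * (2 * (A - (p c).re)) := by
  have hρ' : |ρ| = ρ := abs_of_pos hρ
  have hp' : DiffContOnCl ℂ p (ball c |ρ|) := by rwa [hρ']
  have hpc : ContinuousOn p (sphere c ρ) := hp.continuousOn_ball.mono sphere_subset_closedBall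
  have hint : ∀ {g : ℂ → ℂ}, ContinuousOn g (sphere c ρ) → CircleIntegrable g c ρ :=
    ContinuousOn.circleIntegrable hρ.le
  -- `2 (A - re p) = 2A - p - conj p`: the weight `conj (z - c) ^ k` averages the constant and
  -- `conj p` to zero and extracts the `k`-th Taylor coefficient from `p`
  have hweighted : circleAverage (fun z ↦ conj (z - c) ^ k * (2 * (A - (p z).re) : ℝ)) c ρ =
      -(ρ ^ (2 * k) * iteratedDeriv k p c / k !) := by
    have hpt : (fun z ↦ conj (z - c) ^ k * ((2 * (A - (p z).re) : ℝ) : ℂ)) =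
        fun z ↦ (2 * A : ℂ) • (conj (z - c) ^ k * 1) - conj (z - c) ^ k * p z -
          conj ((z - c) ^ k * p z) := by
      ext z
      push_cast
      rw [re_eq_add_conj, map_mul, map_pow, smul_eq_mul]
      ring
    rw [hpt, circleAverage_fun_sub, circleAverage_fun_sub, circleAverage_fun_smul,
      circleAverage_conj_sub_center_pow_mul hρ diffContOnCl_const,
      circleAverage_conj_sub_center_pow_mul hρ hp]
    · rw [circleAverage_conj, circleAverage_sub_center_pow_mul_eq_zero hp' hk,
        iteratedDeriv_const]
      simp [hk]
    all_goals exact hint (by fun_prop)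
  have hmean : circleAverage (fun z ↦ (p z).re) c ρ = (p c).re := by
    rw [← hp'.circleAverage]
    exact reCLM.circleAverage_comp_comm (hint hpc)
  have hbound : ‖circleAverage (fun z ↦ conj (z - c) ^ k * (2 * (A - (p z).re) : ℝ)) c ρ‖ ≤
      ρ ^ k * (2 * (A - (p c).re)) := calc
    _ ≤ circleAverage (fun z ↦ ‖conj (z - c) ^ k * (2 * (A - (p z).re) : ℝ)‖) c ρ :=
      norm_circleAverage_le _ _ _
    _ = circleAverage (fun z ↦ (2 * ρ ^ k) • (A - (p z).re)) c ρ := by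
      refine circleAverage_congr_sphere fun z hz ↦ ?_
      rw [hρ'] at hz
      have hφ : 0 ≤ 2 * (A - (p z).re) := by linarith [hA z hz]
      rw [norm_mul, norm_pow, RCLike.norm_conj, mem_sphere_iff_norm.mp hz, norm_real,
        Real.norm_of_nonneg hφ, smul_eq_mul]
      ring
    _ = ρ ^ k * (2 * (A - (p c).re)) := by
      rw [circleAverage_fun_smul, circleAverage_fun_sub (circleIntegrable_const A c ρ)
          (ContinuousOn.circleIntegrable hρ.le (f := fun z ↦ (p z).re) (by fun_prop)),
        circleAverage_const, hmean, smul_eq_mul]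
      ring
  rw [hweighted, norm_neg, norm_div, norm_mul, norm_pow, norm_real, Real.norm_of_nonneg hρ.le,
    norm_natCast, div_le_iff₀ (by positivity), pow_mul'] at hbound
  refine le_of_mul_le_mul_left ?_ (pow_pos hρ k)
  calc ρ ^ k * (‖iteratedDeriv k p c‖ * ρ ^ k) = (ρ ^ k) ^ 2 * ‖iteratedDeriv k p c‖ := by ring
    _ ≤ ρ ^ k * (2 * (A - (p c).re)) * k ! := hbound
    _ = ρ ^ k * (k ! * (2 * (A - (p c).re))) := by ring

theorem norm_iteratedDeriv_mul_pow_le_of_forall_mem_ball_re_le {R A : ℝ} (hR : 0 < R)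
    (hp : DifferentiableOn ℂ p (ball c R)) (hA : ∀ z ∈ ball c R, (p z).re ≤ A)
    {k : ℕ} (hk : k ≠ 0) :
    ‖iteratedDeriv k p c‖ * R ^ k ≤ k ! * (2 * (A - (p c).re)) := by
  have hlim : Filter.Tendsto (fun ρ ↦ ‖iteratedDeriv k p c‖ * ρ ^ k) (𝓝[<] R)
      (𝓝 (‖iteratedDeriv k p c‖ * R ^ k)) :=
    ((continuous_const.mul (continuous_pow k)).tendsto R).mono_left nhdsWithin_le_nhds
  refine le_of_tendsto hlim ?_
  filter_upwards [Ioo_mem_nhdsLT hR] with ρ hρ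
  exact norm_iteratedDeriv_mul_pow_le_of_forall_mem_sphere_re_le hρ.1
    (hp.diffContOnCl_ball (closedBall_subset_ball hρ.2))
    (fun z hz ↦ hA z (sphere_subset_ball hρ.2 hz)) hk

theorem norm_iteratedDeriv_mul_pow_le_of_forall_mem_ball_norm_le {f : ℂ → ℂ} {R M : ℝ}
    (hR : 0 < R) (hf : DifferentiableOn ℂ f (ball c R)) (hM : ∀ z ∈ ball c R, ‖f z‖ ≤ M)
    {k : ℕ} (hk : k ≠ 0) :
    ‖iteratedDeriv k f c‖ * R ^ k ≤ k ! * (2 * (M - ‖f c‖)) := by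
  set u := exp (-(arg (f c) * I))
  have hu : ‖u‖ = 1 := by simp [u, norm_exp]
  have huc : u * f c = ‖f c‖ := by
    conv_lhs => rw [← norm_mul_exp_arg_mul_I (f c)]
    rw [mul_left_comm, ← exp_add, neg_add_cancel, exp_zero, mul_one]
  have hre : ∀ z ∈ ball c R, (u * f z).re ≤ M := fun z hz ↦ calc
    (u * f z).re ≤ ‖u * f z‖ := re_le_norm _
    _ = ‖f z‖ := by rw [norm_mul, hu, one_mul]
    _ ≤ M := hM z hz
  simpa [hu, huc] using
    norm_iteratedDeriv_mul_pow_le_of_forall_mem_ball_re_le hR (hf.const_mul u) hre hk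


theorem norm_iteratedDeriv_sub_le_of_forall_norm_iteratedDeriv_mul_pow_le {f : ℂ → ℂ} {z : ℂ}
    {R B : ℝ} (hf : DifferentiableOn ℂ f (ball c R)) (hz : z ∈ ball c R)
    (hB : ∀ k ≠ 0, ‖iteratedDeriv k f c‖ * R ^ k ≤ k ! * B) (n : ℕ) :
    ‖iteratedDeriv n f z - iteratedDeriv n f c‖ ≤
      n ! * B / R ^ n * ((1 - ‖z - c‖ / R)⁻¹ ^ (n + 1) - 1) := by
  have hR : 0 < R := pos_of_mem_ball hz
  have hx : ‖‖z - c‖ / R‖ < 1 := by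
    rw [Real.norm_of_nonneg (by positivity), div_lt_one hR, ← dist_eq_norm]
    exact hz
  have htaylor : HasSum (fun m ↦ (m ! : ℂ)⁻¹ • (z - c) ^ m • iteratedDeriv (m + n) f c)
      (iteratedDeriv n f z) := by
    have hg : DifferentiableOn ℂ (iteratedDeriv n f) (ball c R) := by
      rw [iteratedDeriv_eq_iterate]
      exact ((hf.analyticOnNhd isOpen_ball).iterated_deriv n).differentiableOn
    simpa only [iteratedDeriv_eq_iterate, ← Function.iterate_add_apply] using
      hasSum_taylorSeries_on_ball hg hz
  have htail := (hasSum_nat_add_iff' 1).mpr htaylor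
  simp only [Finset.range_one, Finset.sum_singleton, Nat.factorial_zero, Nat.cast_one, inv_one,
    pow_zero, zero_add, one_smul] at htail
  refine htail.norm_le_of_bounded
    ((hasSum_succ_add_choose_mul_pow_succ hx n).mul_left (n ! * B / R ^ n)) fun m ↦ ?_
  have hd : ‖iteratedDeriv (m + 1 + n) f c‖ ≤ (m + 1 + n) ! * B / R ^ (m + 1 + n) :=
    (le_div_iff₀ (pow_pos hR _)).2 (hB _ (by omega))
  calc ‖((m + 1) ! : ℂ)⁻¹ • (z - c) ^ (m + 1) • iteratedDeriv (m + 1 + n) f c‖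
      = ‖z - c‖ ^ (m + 1) / (m + 1) ! * ‖iteratedDeriv (m + 1 + n) f c‖ := by
        simp only [norm_smul, norm_inv, norm_pow, norm_natCast]
        ring
    _ ≤ ‖z - c‖ ^ (m + 1) / (m + 1) ! * ((m + 1 + n) ! * B / R ^ (m + 1 + n)) := by gcongr
    _ = n ! * B / R ^ n * ((m + 1 + n).choose n * (‖z - c‖ / R) ^ (m + 1)) := by
        rw [← Nat.add_choose_mul_factorial_mul_factorial (m + 1) n, div_pow]
        push_cast
        field_simp
        ring

end Complex

open Complex Metric

theorem stmt16_general (R r M : ℝ) (f : ℂ → ℂ)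
    (hR : 0 < R) (h3 : r < R)
    (hf : DifferentiableOn ℂ f (ball 0 R))
    (hM : IsLUB ((fun w => ‖f w‖) '' ball (0:ℂ) R) M)
    (z : ℂ) (hz : ‖z‖ = r) (n : ℕ) :
    ‖iteratedDeriv n f z - iteratedDeriv n f 0‖ ≤
      2 * n.factorial * (R ^ (n + 1) - (R - r) ^ (n + 1)) / ((R - r) ^ (n + 1) * R ^ n) *
        (M - ‖f 0‖) := by
  have hbound : ∀ w ∈ ball (0 : ℂ) R, ‖f w‖ ≤ M := fun w hw ↦ hM.1 ⟨w, hw, rfl⟩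
  have hz' : z ∈ ball (0 : ℂ) R := by rwa [mem_ball_zero_iff, hz]
  have htail := norm_iteratedDeriv_sub_le_of_forall_norm_iteratedDeriv_mul_pow_le hf hz'
    (fun k hk ↦ norm_iteratedDeriv_mul_pow_le_of_forall_mem_ball_norm_le hR hf hbound hk) n
  rw [sub_zero, hz, one_sub_div hR.ne', inv_div, div_pow] at htail
  refine htail.trans_eq ?_
  have hRr : R - r ≠ 0 := sub_ne_zero.mpr h3.ne'
  field_simp

theorem stmt16 (R r M : ℝ) (f : ℂ → ℂ)
    (hR : 0 < R) (hr : 0 ≤ r) (h3 : r < R)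
    (hf : DifferentiableOn ℂ f (ball 0 R))
    (hM : IsLUB ((fun w => ‖f w‖) '' ball (0:ℂ) R) M)
    (z : ℂ) (hz : ‖z‖ = r) (n : ℕ) :
    ‖iteratedDeriv n f z - iteratedDeriv n f 0‖ ≤
      2 * n.factorial * (R ^ (n + 1) - (R - r) ^ (n + 1)) / ((R - r) ^ (n + 1) * R ^ n) *
        (M - ‖f 0‖) :=
  stmt16_general R r M f hR h3 hf hM z hz n
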